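/- arXiv:0804.1361 — 4 statements merged into one kernel-verified Lean document; each statement's English description precedes it below -/
import Mathlib

section
/- Let C be a convex set in ℝ^d and let X_1, X_2, …, X_{d+1} be d+1 finite point sets in ℝ^d such that the convex hull of each X_i intersects C. Then there exist d+1 points x_1, x_2, …, x_{d+1} with x_i ∈ X_i for each i such that the convex hull of {x_1, x_2, …, x_{d+1}} intersects C. -/
/-!
Following Bárány: choose one witness `yᵢ ∈ conv Xᵢ ∩ C` per colour and replace `C` by the compact
set `conv {yᵢ}`. Among all colourful selections, take one whose hull is at minimal Euclidean
distance from `C`, realised by points `a` and `b`. If `a ≠ b`, then `a` maximises `⟪b - a, ·⟫` on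
the selection, so by Carathéodory inside that face it lies in the hull of at most `d` of the chosen
points. Swapping the unused colour `i` for a point of `Xᵢ` that is at least as far along
`b - a` as `yᵢ`, which lies beyond `b` since `b` is the point of `C` nearest to `a`, gives a
selection whose hull comes strictly closer to `b`.
-/

open Set Module
open scoped RealInnerProductSpace

theorem Convex.forall_dist_le_iff_isMaxOn_inner {F : Type*} [NormedAddCommGroup F]
    [InnerProductSpace ℝ F] {K : Set F} (hK : Convex ℝ K) {u v : F} (hv : v ∈ K) :
    (∀ w ∈ K, dist u v ≤ dist u w) ↔ IsMaxOn (innerₛₗ ℝ (u - v)) K v := by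
  have : Nonempty K := ⟨⟨v, hv⟩⟩
  have hbdd : BddBelow (range fun w : K => ‖u - w‖) := ⟨0, by rintro _ ⟨w, rfl⟩; positivity⟩
  have hmax : IsMaxOn (innerₛₗ ℝ (u - v)) K v ↔ ∀ w ∈ K, ⟪u - v, w - v⟫ ≤ 0 := by
    simp only [isMaxOn_iff, innerₛₗ_apply_apply, inner_sub_right, sub_nonpos]
  simp only [hmax, dist_eq_norm, ← norm_eq_iInf_iff_real_inner_le_zero hK hv]
  exact ⟨fun h => le_antisymm (le_ciInf fun w => h w w.2) (ciInf_le hbdd ⟨v, hv⟩),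
    fun h w hw => h ▸ ciInf_le hbdd ⟨w, hw⟩⟩

theorem IsMaxOn.exists_finset_card_le_finrank_mem_convexHull {𝕜 V : Type*} [Field 𝕜]
    [LinearOrder 𝕜] [IsStrictOrderedRing 𝕜] [AddCommGroup V] [Module 𝕜 V]
    [FiniteDimensional 𝕜 V] {f : V →ₗ[𝕜] 𝕜} (hf : f ≠ 0) {s : Set V} {z : V}
    (hmax : IsMaxOn f s z) (hz : z ∈ convexHull 𝕜 s) :
    ∃ t : Finset V, ↑t ⊆ s ∧ t.card ≤ finrank 𝕜 V ∧ z ∈ convexHull 𝕜 (t : Set V) := by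
  classical
  obtain ⟨κ, _, p, w, hps, hind, hw₀, hw₁, hwz⟩ := eq_pos_convex_span_of_mem_convexHull hz
  have hlevel : ∀ k, f (p k) = f z := by
    by_contra! ⟨k, hk⟩
    have hlt : ∑ j, w j * f (p j) < ∑ j, w j * f z :=
      Finset.sum_lt_sum (fun j _ => mul_le_mul_of_nonneg_left (hmax (hps ⟨j, rfl⟩)) (hw₀ j).le)
        ⟨k, Finset.mem_univ k, mul_lt_mul_of_pos_left ((hmax (hps ⟨k, rfl⟩)).lt_of_ne hk) (hw₀ k)⟩
    rw [← Finset.sum_mul, hw₁, one_mul, ← hwz, map_sum] at hlt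
    simp [map_smul] at hlt
  have hspan : vectorSpan 𝕜 (range p) ≤ LinearMap.ker f := by
    rw [vectorSpan_def, Submodule.span_le]
    rintro _ ⟨_, ⟨i, rfl⟩, _, ⟨j, rfl⟩, rfl⟩
    simp [hlevel]
  have hker : finrank 𝕜 (LinearMap.ker f) < finrank 𝕜 V :=
    Submodule.finrank_lt (LinearMap.ker_eq_top.not.2 hf)
  refine ⟨Finset.univ.image p, by simpa using hps, ?_, ?_⟩
  · have := hind.card_le_finrank_succ
    have := Submodule.finrank_mono hspan
    have := Finset.card_image_le (s := Finset.univ) (f := p)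
    simp only [Finset.card_univ] at this
    omega
  · rw [← hwz]
    exact (convex_convexHull 𝕜 _).sum_mem (fun j _ => (hw₀ j).le) hw₁
      fun j _ => subset_convexHull 𝕜 _ (by simp)

theorem exists_subset_image_compl_singleton {α ι : Type*} [Fintype ι] {s : ι → α}
    {t : Finset α} (hts : ↑t ⊆ range s) (hcard : t.card < Fintype.card ι) :
    ∃ i, ↑t ⊆ s '' {i}ᶜ := by
  classical
  have : Nonempty ι := Fintype.card_pos_iff.1 (by omega)
  obtain ⟨i, -, hi⟩ := Finset.exists_mem_notMem_of_card_lt_card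
    (s := t.image (Function.invFun s)) (t := Finset.univ)
    (Finset.card_image_le.trans_lt (by rwa [Finset.card_univ]))
  exact ⟨i, fun x hx => ⟨Function.invFun s x, fun h => hi (h ▸ Finset.mem_image_of_mem _ hx),
    Function.invFun_eq (hts hx)⟩⟩

section InnerProductSpace

variable {E ι : Type*} [NormedAddCommGroup E] [InnerProductSpace ℝ E] [FiniteDimensional ℝ E]
  [Fintype ι] {X : ι → Set E} {C : Set E}

theorem eq_of_forall_dist_le_of_mem_univ_pi (hι : finrank ℝ E < Fintype.card ι)
    (hC : Convex ℝ C) (hX : ∀ i, (convexHull ℝ (X i) ∩ C).Nonempty) {s₀ : ι → E}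
    (hs₀ : s₀ ∈ univ.pi X) {a b : E} (ha : a ∈ convexHull ℝ (range s₀)) (hb : b ∈ C)
    (hmin : ∀ s ∈ univ.pi X, ∀ p ∈ convexHull ℝ (range s), ∀ q ∈ C, dist a b ≤ dist p q) :
    a = b := by
  classical
  by_contra hab
  set u := b - a
  have hu : u ≠ 0 := sub_ne_zero.2 (Ne.symm hab)
  have ha_max : IsMaxOn (innerₛₗ ℝ u) (convexHull ℝ (range s₀)) a :=
    ((convex_convexHull ℝ _).forall_dist_le_iff_isMaxOn_inner ha).1 fun w hw => by
      simpa only [dist_comm b] using hmin s₀ hs₀ w hw b hb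
  have hb_max : IsMaxOn (innerₛₗ ℝ (a - b)) C b :=
    (hC.forall_dist_le_iff_isMaxOn_inner hb).1 fun q hq => hmin s₀ hs₀ a ha q hq
  obtain ⟨t, hts, htcard, hat⟩ :=
    (ha_max.on_subset (subset_convexHull ℝ _)).exists_finset_card_le_finrank_mem_convexHull
      (fun h => hu (inner_self_eq_zero.1 (LinearMap.congr_fun h u))) ha
  obtain ⟨i, hti⟩ := exists_subset_image_compl_singleton hts (htcard.trans_lt hι)
  obtain ⟨y, hyX, hyC⟩ := hX i
  obtain ⟨x, hxX, hyx⟩ :=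
    ((innerₛₗ ℝ u).convexOn convex_univ).exists_ge_of_mem_convexHull (subset_univ _) hyX
  have hax : ⟪u, a⟫ < ⟪u, x⟫ := by
    have hby : ⟪a - b, y⟫ ≤ ⟪a - b, b⟫ := hb_max hyC
    rw [← neg_sub b a, inner_neg_left, inner_neg_left, neg_le_neg_iff] at hby
    calc ⟪u, a⟫ < ⟪u, a⟫ + ⟪u, u⟫ := lt_add_of_pos_right _ (real_inner_self_pos.2 hu)
      _ = ⟪u, b⟫ := by rw [← inner_add_right, add_sub_cancel]
      _ ≤ ⟪u, y⟫ := hby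
      _ ≤ ⟪u, x⟫ := hyx
  set s₁ := Function.update s₀ i x
  have hs₁ : s₁ ∈ univ.pi X := (update_mem_pi_iff_of_mem hs₀).2 fun _ => hxX
  have ha₁ : a ∈ convexHull ℝ (range s₁) := by
    refine convexHull_mono (hti.trans ?_) hat
    rintro _ ⟨j, hj, rfl⟩
    exact ⟨j, Function.update_of_ne hj _ _⟩
  have hx₁ : x ∈ convexHull ℝ (range s₁) := subset_convexHull ℝ _ ⟨i, by simp [s₁]⟩
  obtain ⟨p, hp, hpb⟩ : ∃ p ∈ convexHull ℝ (range s₁), dist b p < dist b a := by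
    by_contra! h
    exact hax.not_ge (((convex_convexHull ℝ _).forall_dist_le_iff_isMaxOn_inner ha₁).1 h hx₁)
  exact hpb.not_ge (by simpa only [dist_comm b] using hmin s₁ hs₁ p hp b hb)

theorem exists_mem_univ_pi_convexHull_inter_nonempty_of_isCompact
    (hι : finrank ℝ E < Fintype.card ι) (hCc : IsCompact C) (hC : Convex ℝ C)
    (hXfin : ∀ i, (X i).Finite) (hX : ∀ i, (convexHull ℝ (X i) ∩ C).Nonempty) :
    ∃ x ∈ univ.pi X, (convexHull ℝ (range x) ∩ C).Nonempty := by
  set P := ⋃ s ∈ univ.pi X, convexHull ℝ (range s) ×ˢ C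
  have hPc : IsCompact P := (Finite.pi hXfin).isCompact_biUnion fun s _ =>
    ((finite_range s).isCompact_convexHull ℝ).prod hCc
  have hPne : P.Nonempty := by
    obtain ⟨j⟩ : Nonempty ι := Fintype.card_pos_iff.1 (by omega)
    obtain ⟨s, hs⟩ : (univ.pi X).Nonempty :=
      univ_pi_nonempty_iff.2 fun i => convexHull_nonempty_iff.1 ((hX i).mono inter_subset_left)
    obtain ⟨c, -, hc⟩ := hX j
    exact ⟨(s j, c), mem_biUnion hs ⟨subset_convexHull ℝ _ ⟨j, rfl⟩, hc⟩⟩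
  obtain ⟨⟨a, b⟩, hab, hmin⟩ := hPc.exists_isMinOn hPne (continuous_dist.continuousOn)
  obtain ⟨s₀, hs₀, ha, hb⟩ := mem_iUnion₂.1 hab
  have hab : a = b := eq_of_forall_dist_le_of_mem_univ_pi hι hC hX hs₀ ha hb fun s hs p hp q hq =>
    hmin (mem_biUnion hs (mk_mem_prod hp hq))
  exact ⟨s₀, hs₀, a, ha, hab ▸ hb⟩

theorem exists_mem_univ_pi_convexHull_inter_nonempty (hι : finrank ℝ E < Fintype.card ι)
    (hC : Convex ℝ C) (hXfin : ∀ i, (X i).Finite)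
    (hX : ∀ i, (convexHull ℝ (X i) ∩ C).Nonempty) :
    ∃ x ∈ univ.pi X, (convexHull ℝ (range x) ∩ C).Nonempty := by
  choose y hyX hyC using hX
  obtain ⟨x, hx, z, hzx, hzy⟩ := exists_mem_univ_pi_convexHull_inter_nonempty_of_isCompact hι
    ((finite_range y).isCompact_convexHull ℝ) (convex_convexHull ℝ _) hXfin
    fun i => ⟨y i, hyX i, subset_convexHull ℝ _ ⟨i, rfl⟩⟩
  exact ⟨x, hx, z, hzx, convexHull_min (range_subset_iff.2 hyC) hC hzy⟩

end InnerProductSpace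

theorem LinearMap.image_convexHull_inter {V W : Type*} [AddCommGroup V] [Module ℝ V]
    [AddCommGroup W] [Module ℝ W] (f : V →ₗ[ℝ] W) (hf : Function.Injective f) (s t : Set V) :
    f '' (convexHull ℝ s ∩ t) = convexHull ℝ (f '' s) ∩ f '' t := by
  rw [image_inter hf, f.image_convexHull]

theorem exists_mem_univ_pi_convexHull_inter_nonempty_of_finiteDimensional {V ι : Type*}
    [AddCommGroup V] [Module ℝ V] [FiniteDimensional ℝ V] [Fintype ι]
    (hι : finrank ℝ V < Fintype.card ι) {X : ι → Set V} {C : Set V} (hC : Convex ℝ C)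
    (hXfin : ∀ i, (X i).Finite) (hX : ∀ i, (convexHull ℝ (X i) ∩ C).Nonempty) :
    ∃ x ∈ univ.pi X, (convexHull ℝ (range x) ∩ C).Nonempty := by
  let e : V ≃ₗ[ℝ] EuclideanSpace ℝ (Fin (finrank ℝ V)) := LinearEquiv.ofFinrankEq _ _ (by simp)
  have he : ∀ s t, e '' (convexHull ℝ s ∩ t) = convexHull ℝ (e '' s) ∩ e '' t :=
    e.toLinearMap.image_convexHull_inter e.injective
  have hC' : Convex ℝ (e '' C) := hC.linear_image e.toLinearMap
  obtain ⟨x', hx', hx'C⟩ := exists_mem_univ_pi_convexHull_inter_nonempty (by simpa using hι)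
    hC' (fun i => (hXfin i).image e)
    fun i => he (X i) C ▸ (hX i).image e
  have hx : e ∘ (e.symm ∘ x') = x' := by ext1; simp
  refine ⟨e.symm ∘ x', fun i _ => ?_, ?_⟩
  · have : x' i ∈ e '' X i := hx' i trivial
    rwa [e.image_eq_preimage_symm] at this
  · rw [← hx, range_comp, ← he] at hx'C
    exact hx'C.of_image

/-- Colorful Carathéodory theorem, version with a convex set `C`:
if the convex hull of each of the `d+1` finite point sets `X i` intersects `C`,
then one can pick one point `x i` from each `X i` so that the convex hull of the
chosen points intersects `C`. -/
theorem colorful_caratheodory_convex_set (d : ℕ)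
    (C : Set (Fin d → ℝ)) (hC : Convex ℝ C)
    (X : Fin (d + 1) → Finset (Fin d → ℝ))
    (hX : ∀ i, ((convexHull ℝ (X i : Set (Fin d → ℝ))) ∩ C).Nonempty) :
    ∃ x : Fin (d + 1) → (Fin d → ℝ), (∀ i, x i ∈ X i) ∧
      ((convexHull ℝ (Set.range x)) ∩ C).Nonempty := by
  obtain ⟨x, hx, hxC⟩ := exists_mem_univ_pi_convexHull_inter_nonempty_of_finiteDimensional
    (by simp) hC (fun i => (X i).finite_toSet) hX
  exact ⟨x, fun i => hx i trivial, hxC⟩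
end

section
/- Max-plus colorful Carathéodory theorem: let X_1, X_2, …, X_{d+1} be d+1 finite point sets in (Fin d → EReal) and let p be a point such that the max-plus convex hull of each X_i contains p. Then there exist d+1 points x_1, x_2, …, x_{d+1} with x_i ∈ X_i for each i, such that the max-plus convex hull of {x_1, x_2, …, x_{d+1}} contains p. -/
/-!
For each `i` fix weights witnessing `p ∈ mpHull (X i)`. A point `y ∈ X i` with weight `c` always
satisfies `c ≤ 0` and `c + y ≤ p`, so any selection of such weighted points stays below `p`; it
represents `p` as soon as one selected weight is `0` and every coordinate of `p` is attained by
some selected point. There are `d + 1` colours and exactly `d + 1` requirements (the `d`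
coordinates and the normalisation), so colour `k` can be spent on coordinate `k` and the last
colour on a point of weight `0`.
-/

def mpHull {d : ℕ} (X : Finset (Fin d → EReal)) : Set (Fin d → EReal) :=
  {p | ∃ lam : (Fin d → EReal) → EReal,
      X.sup lam = 0 ∧ ∀ k, p k = X.sup fun y => lam y + y k}

theorem Finset.sup_eq_iff_of_nonempty {ι α : Type*} [LinearOrder α] [OrderBot α]
    {s : Finset ι} (hs : s.Nonempty) {f : ι → α} {a : α} :
    s.sup f = a ↔ (∀ i ∈ s, f i ≤ a) ∧ ∃ i ∈ s, f i = a := by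
  constructor
  · rintro rfl
    obtain ⟨i, hi, hmax⟩ := s.exists_mem_eq_sup hs f
    exact ⟨fun j hj => s.le_sup hj, i, hi, hmax.symm⟩
  · rintro ⟨hle, i, hi, rfl⟩
    exact le_antisymm (Finset.sup_le hle) (s.le_sup hi)

theorem mem_mpHull_iff {d : ℕ} {S : Finset (Fin d → EReal)} {p : Fin d → EReal} :
    p ∈ mpHull S ↔ ∃ lam : (Fin d → EReal) → EReal,
      ((∀ y ∈ S, lam y ≤ 0) ∧ ∃ y ∈ S, lam y = 0) ∧
      ∀ k, (∀ y ∈ S, lam y + y k ≤ p k) ∧ ∃ y ∈ S, lam y + y k = p k := by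
  constructor
  · rintro ⟨lam, hlam, hp⟩
    have hS : S.Nonempty := Finset.nonempty_iff_ne_empty.2 (by rintro rfl; simp at hlam)
    exact ⟨lam, (Finset.sup_eq_iff_of_nonempty hS).1 hlam,
      fun k => (Finset.sup_eq_iff_of_nonempty hS).1 (hp k).symm⟩
  · rintro ⟨lam, hlam, hp⟩
    obtain ⟨y, hy, -⟩ := hlam.2
    exact ⟨lam, (Finset.sup_eq_iff_of_nonempty ⟨y, hy⟩).2 hlam,
      fun k => ((Finset.sup_eq_iff_of_nonempty ⟨y, hy⟩).2 (hp k)).symm⟩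

theorem mem_mpHull_image_of_weights {d : ℕ} {ι : Type*} [Fintype ι]
    (x : ι → Fin d → EReal) (μ : ι → EReal) {p : Fin d → EReal}
    (hle : ∀ i, μ i ≤ 0 ∧ ∀ k, μ i + x i k ≤ p k) (hzero : ∃ i, μ i = 0)
    (hattain : ∀ k, ∃ i, μ i + x i k = p k) :
    p ∈ mpHull (Finset.univ.image x) := by
  classical
  have := hzero.nonempty
  let lam : (Fin d → EReal) → EReal :=
    fun y => Finset.univ.sup fun i => if x i = y then μ i else ⊥
  have le_lam (i : ι) : μ i ≤ lam (x i) :=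
    Finset.le_sup_of_le (Finset.mem_univ i) (by simp)
  have lam_eq (y : Fin d → EReal) : ∃ i, lam y = if x i = y then μ i else ⊥ := by
    obtain ⟨i, -, hi⟩ := Finset.univ.exists_mem_eq_sup Finset.univ_nonempty
      fun i => if x i = y then μ i else ⊥
    exact ⟨i, hi⟩
  have lam_le (y : Fin d → EReal) : lam y ≤ 0 ∧ ∀ k, lam y + y k ≤ p k := by
    obtain ⟨i, hi⟩ := lam_eq y
    rw [hi]
    split_ifs with hxy
    · exact hxy ▸ hle i
    · simp
  refine mem_mpHull_iff.2
    ⟨lam, ⟨fun y _ => (lam_le y).1, ?_⟩, fun k => ⟨fun y _ => (lam_le y).2 k, ?_⟩⟩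
  · obtain ⟨i, hi⟩ := hzero
    exact ⟨x i, Finset.mem_image_of_mem x (Finset.mem_univ i),
      le_antisymm (lam_le _).1 (hi ▸ le_lam i)⟩
  · obtain ⟨i, hi⟩ := hattain k
    exact ⟨x i, Finset.mem_image_of_mem x (Finset.mem_univ i),
      le_antisymm ((lam_le _).2 k) (hi ▸ add_le_add_left (le_lam i) _)⟩

/-- Max-plus colorful Carathéodory theorem. -/
theorem maxPlus_colorful_caratheodory (d : ℕ)
    (X : Fin (d + 1) → Finset (Fin d → EReal)) (p : Fin d → EReal)
    (hX : ∀ i, p ∈ mpHull (X i)) :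
    ∃ x : Fin (d + 1) → (Fin d → EReal), (∀ i, x i ∈ X i) ∧
      p ∈ mpHull (Finset.image x Finset.univ) := by
  choose lam hlam hp using fun i => mem_mpHull_iff.1 (hX i)
  obtain ⟨y₀, hy₀, hy₀_zero⟩ := (hlam (Fin.last d)).2
  choose y hy hy_attain using fun k : Fin d => (hp k.castSucc k).2
  let x : Fin (d + 1) → Fin d → EReal := Fin.lastCases y₀ y
  have hx : ∀ i, x i ∈ X i :=
    Fin.lastCases (by simpa [x] using hy₀) (fun k => by simpa [x] using hy k)
  refine ⟨x, hx, mem_mpHull_image_of_weights x (fun i => lam i (x i))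
    (fun i => ⟨(hlam i).1 _ (hx i), fun k => (hp i k).1 _ (hx i)⟩)
    ⟨Fin.last d, by simpa [x] using hy₀_zero⟩
    (fun k => ⟨k.castSucc, by simpa [x] using hy_attain k⟩)⟩
end

section
/- Let G be a bipartite graph with finite color classes U and W, with no isolated vertices, and let q be a positive integer. If |U| ≥ (q-1)|W| + 1, then there exist q pairwise disjoint nonempty subsets U_1, …, U_q of U with N(U_1) = N(U_2) = … = N(U_q). Moreover, there is a subset S ⊆ W such that the number of distinct unordered families {U_1, …, U_q} of q pairwise disjoint nonempty subsets of U satisfying N(U_i) = S for all i is at least ((q-1)!)^{|S| - 1}. -/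
/-!
Let `U_T` be the set of vertices of `U` whose neighbourhood lies in `T ⊆ W`, and choose `S` of
minimum size with `|U_S| > (q-1)|S|`. By minimality every nonempty `R ⊆ S` has more than
`(q-1)|R|` neighbours in `U_S`, so Hall's theorem gives pairwise disjoint sets `B_s` of `q-1`
neighbours of each `s ∈ S`, and every such `R` has a neighbour outside `⋃_{s ∈ R} B_s`.
Count the `q`-colourings of `U_S` in which every colour occurs among the neighbours of every
`s ∈ S`: removing one `s` at a time, together with a neighbour `t` of `s` outside the remaining
`B`'s, the colours of `B_s` may be any bijection onto the colours other than that of `t`. This gives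
at least `q ((q-1)!)^|S|` colourings; their colour classes are `q` disjoint sets with neighbourhood
`S`, and each family of classes comes from at most `q!` colourings.
-/

open Finset Function Nat

theorem exists_pairwiseDisjoint_subsets_card_eq {ι α : Type*} [DecidableEq α]
    (A : ι → Finset α) (k : ℕ) (h : ∀ R : Finset ι, k * #R ≤ #(R.biUnion A)) :
    ∃ B : ι → Finset α, (∀ i, B i ⊆ A i) ∧ (∀ i, #(B i) = k) ∧ Pairwise (Disjoint on B) := by
  classical
  obtain ⟨f, hf, hfA⟩ := (all_card_le_biUnion_card_iff_exists_injective
    fun p : ι × Fin k => A p.1).1 fun I => calc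
      #I ≤ #(I.image Prod.fst ×ˢ (univ : Finset (Fin k))) :=
        card_le_card fun p hp => mem_product.2 ⟨mem_image_of_mem _ hp, mem_univ _⟩
      _ = k * #(I.image Prod.fst) := by
        rw [card_product, Finset.card_univ, Fintype.card_fin, mul_comm]
      _ ≤ #(I.biUnion fun p => A p.1) := by rw [← image_biUnion]; exact h _
  refine ⟨fun i => univ.map ⟨fun j => f (i, j), fun j j' h => (Prod.ext_iff.1 (hf h)).2⟩,
    fun i => ?_, fun i => by simp, fun i i' hii' => disjoint_left.2 ?_⟩
  · intro u hu
    obtain ⟨j, -, rfl⟩ := mem_map.1 hu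
    exact hfA (i, j)
  · intro u hu hu'
    obtain ⟨j, -, rfl⟩ := mem_map.1 hu
    obtain ⟨j', -, h⟩ := mem_map.1 hu'
    exact hii' (Prod.ext_iff.1 (hf h)).1.symm

section Rainbow

variable {ι α κ : Type*} [DecidableEq α] {A B : ι → Finset α}

theorem exists_mem_biUnion_notMem_biUnion {k : ℕ} (hB : ∀ i, #(B i) = k)
    (hdisj : Pairwise (Disjoint on B))
    (hA : ∀ R : Finset ι, R.Nonempty → k * #R < #(R.biUnion A)) {R : Finset ι}
    (hR : R.Nonempty) : ∃ t ∈ R.biUnion A, t ∉ R.biUnion B := by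
  by_contra! h
  have hcardB : #(R.biUnion B) = k * #R := by
    rw [card_biUnion (hdisj.set_pairwise _), sum_congr rfl fun i _ => hB i, sum_const,
      smul_eq_mul, mul_comm]
  have := card_le_card (show R.biUnion A ⊆ R.biUnion B from h)
  have := hA R hR
  omega

theorem notMem_biUnion_erase [DecidableEq ι] (hdisj : Pairwise (Disjoint on B)) {R : Finset ι}
    {i : ι} {u : α} (hu : u ∈ B i) : u ∉ (R.erase i).biUnion B := by
  simp only [mem_biUnion, not_exists, not_and]
  exact fun i' hi' hu' => disjoint_left.1 (hdisj (ne_of_mem_erase hi').symm) hu hu'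

variable [Fintype α] [Fintype κ] [DecidableEq κ]

variable (A B) in
def rainbowExtensions (R : Finset ι) (c₀ : α → κ) : Finset (α → κ) :=
  {c | (∀ u ∉ R.biUnion B, c u = c₀ u) ∧ ∀ i ∈ R, ∀ j, ∃ u ∈ A i, c u = j}

theorem rainbowExtensions_erase_subset [DecidableEq ι] (hdisj : Pairwise (Disjoint on B))
    {R : Finset ι} {i : ι} (hi : i ∈ R) (hBA : B i ⊆ A i) {t : α} (ht : t ∈ A i)
    (htB : t ∉ R.biUnion B) (c₀ : α → κ) (e : B i ≃ {j // j ≠ c₀ t}) :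
    rainbowExtensions A B (R.erase i) (fun u => if h : u ∈ B i then (e ⟨u, h⟩ : κ) else c₀ u) ⊆
      rainbowExtensions A B R c₀ := by
  intro c hc
  simp only [rainbowExtensions, mem_filter, mem_univ, true_and] at hc ⊢
  obtain ⟨hoff, hrainbow⟩ := hc
  have hout : ∀ u ∉ R.biUnion B, c u = c₀ u := by
    intro u hu
    rw [hoff u fun h => hu (biUnion_subset_biUnion_of_subset_left _ (erase_subset _ _) h),
      dif_neg fun h => hu (mem_biUnion.2 ⟨i, hi, h⟩)]
  refine ⟨hout, fun i' hi' j => ?_⟩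
  obtain rfl | hi'i := eq_or_ne i' i
  · by_cases hj : j = c₀ t
    · exact ⟨t, ht, hj ▸ hout t htB⟩
    · -- the colours other than `c₀ t` are taken by `B i'`
      refine ⟨e.symm ⟨j, hj⟩, hBA (e.symm ⟨j, hj⟩).2, ?_⟩
      simp [hoff _ (notMem_biUnion_erase hdisj (e.symm ⟨j, hj⟩).2)]
  · exact hrainbow i' (mem_erase.2 ⟨hi'i, hi'⟩) j

theorem factorial_mul_le_card_rainbowExtensions [DecidableEq ι]
    (hdisj : Pairwise (Disjoint on B)) {R : Finset ι} {i : ι} (hi : i ∈ R) (hBA : B i ⊆ A i)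
    (hκ : Fintype.card κ = #(B i) + 1) {t : α} (ht : t ∈ A i) (htB : t ∉ R.biUnion B)
    (c₀ : α → κ) {n : ℕ} (hn : ∀ c : α → κ, n ≤ #(rainbowExtensions A B (R.erase i) c)) :
    (#(B i))! * n ≤ #(rainbowExtensions A B R c₀) := by
  set recolor : (B i ≃ {j // j ≠ c₀ t}) → α → κ :=
    fun e u => if h : u ∈ B i then (e ⟨u, h⟩ : κ) else c₀ u
  have hcard : Fintype.card (B i ≃ {j // j ≠ c₀ t}) = (#(B i))! := by
    rw [Fintype.card_equiv (Fintype.equivOfCardEq (by simp [hκ])), Fintype.card_coe]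
  have hdisj' : (↑(univ : Finset (B i ≃ {j // j ≠ c₀ t})) : Set _).PairwiseDisjoint
      fun e => rainbowExtensions A B (R.erase i) (recolor e) := by
    intro e _ e' _ hee'
    refine disjoint_left.2 fun c hc hc' => hee' (Equiv.ext fun u => Subtype.ext ?_)
    have hu := notMem_biUnion_erase (R := R) hdisj u.2
    have h := (mem_filter.1 hc).2.1 u hu
    have h' := (mem_filter.1 hc').2.1 u hu
    simp only [recolor, dif_pos u.2] at h h'
    exact h.symm.trans h'
  calc (#(B i))! * n = ∑ _e : B i ≃ {j // j ≠ c₀ t}, n := by simp [hcard]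
    _ ≤ ∑ e, #(rainbowExtensions A B (R.erase i) (recolor e)) := sum_le_sum fun e _ => hn _
    _ = #(univ.biUnion fun e => rainbowExtensions A B (R.erase i) (recolor e)) :=
      (card_biUnion hdisj').symm
    _ ≤ #(rainbowExtensions A B R c₀) :=
      card_le_card (biUnion_subset.2 fun e _ =>
        rainbowExtensions_erase_subset hdisj hi hBA ht htB c₀ e)

theorem pow_card_le_card_rainbowExtensions [DecidableEq ι] {k : ℕ}
    (hκ : Fintype.card κ = k + 1) (hBA : ∀ i, B i ⊆ A i) (hB : ∀ i, #(B i) = k)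
    (hdisj : Pairwise (Disjoint on B))
    (hA : ∀ R : Finset ι, R.Nonempty → k * #R < #(R.biUnion A)) (R : Finset ι)
    (c₀ : α → κ) : k ! ^ #R ≤ #(rainbowExtensions A B R c₀) := by
  induction R using Finset.strongInduction generalizing c₀ with
  | H R ih =>
    obtain rfl | hR := R.eq_empty_or_nonempty
    · simpa [rainbowExtensions] using ⟨c₀, by simp⟩
    obtain ⟨t, ht, htB⟩ := exists_mem_biUnion_notMem_biUnion hB hdisj hA hR
    obtain ⟨i, hi, hti⟩ := mem_biUnion.1 ht
    calc k ! ^ #R = k ! * k ! ^ #(R.erase i) := by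
          rw [card_erase_of_mem hi, ← _root_.pow_succ', Nat.sub_add_cancel (card_pos.2 hR)]
      _ ≤ #(rainbowExtensions A B R c₀) := by
        simpa only [hB] using factorial_mul_le_card_rainbowExtensions hdisj hi (hBA i)
          (by rw [hκ, hB]) hti htB c₀ fun c => ih _ (erase_ssubset hi) c

end Rainbow

section ColorClasses

variable {α κ : Type*} [DecidableEq α] [Fintype κ] [DecidableEq κ]

def colorClasses (X : Finset α) (c : α → κ) : Finset (Finset α) :=
  univ.image fun j => X.filter (c · = j)

variable {X : Finset α} {c c' : α → κ}

theorem card_colorClasses (hc : Set.SurjOn c X Set.univ) :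
    #(colorClasses X c) = Fintype.card κ := by
  refine card_image_of_injective _ fun j j' h => ?_
  obtain ⟨u, hu, rfl⟩ := hc (Set.mem_univ j)
  have : u ∈ X.filter (c · = c u) := mem_filter.2 ⟨hu, rfl⟩
  rw [h] at this
  exact (mem_filter.1 this).2

theorem nonempty_of_mem_colorClasses (hc : Set.SurjOn c X Set.univ) {A : Finset α}
    (hA : A ∈ colorClasses X c) : A.Nonempty := by
  obtain ⟨j, -, rfl⟩ := mem_image.1 hA
  obtain ⟨u, hu, rfl⟩ := hc (Set.mem_univ j)
  exact ⟨u, mem_filter.2 ⟨hu, rfl⟩⟩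

theorem disjoint_of_mem_colorClasses {A B : Finset α} (hA : A ∈ colorClasses X c)
    (hB : B ∈ colorClasses X c) (hAB : A ≠ B) : Disjoint A B := by
  obtain ⟨j, -, rfl⟩ := mem_image.1 hA
  obtain ⟨j', -, rfl⟩ := mem_image.1 hB
  exact disjoint_filter.2 fun u _ huj huj' => hAB (by rw [← huj, ← huj'])

theorem exists_comp_eq_of_colorClasses_subset (hc : Set.SurjOn c X Set.univ)
    (h : colorClasses X c ⊆ colorClasses X c') : ∃ θ : κ → κ, ∀ u ∈ X, c' u = θ (c u) := by
  choose rep hrepX hrep using fun j => hc (Set.mem_univ j)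
  refine ⟨fun j => c' (rep j), fun u hu => ?_⟩
  obtain ⟨j, -, hj⟩ := mem_image.1 (h (mem_image_of_mem (fun j => X.filter (c · = j))
    (mem_univ (c u))))
  have hu' : u ∈ X.filter (c' · = j) := hj ▸ mem_filter.2 ⟨hu, rfl⟩
  have hrep' : rep (c u) ∈ X.filter (c' · = j) := hj ▸ mem_filter.2 ⟨hrepX _, hrep _⟩
  exact (mem_filter.1 hu').2.trans (mem_filter.1 hrep').2.symm

theorem exists_perm_of_colorClasses_eq (hc : Set.SurjOn c X Set.univ)
    (hc' : Set.SurjOn c' X Set.univ) (h : colorClasses X c = colorClasses X c') :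
    ∃ σ : Equiv.Perm κ, ∀ u ∈ X, c' u = σ (c u) := by
  obtain ⟨θ, hθ⟩ := exists_comp_eq_of_colorClasses_subset hc h.subset
  obtain ⟨θ', hθ'⟩ := exists_comp_eq_of_colorClasses_subset hc' h.symm.subset
  refine ⟨⟨θ, θ', fun j => ?_, fun j => ?_⟩, hθ⟩
  · obtain ⟨u, hu, rfl⟩ := hc (Set.mem_univ j)
    rw [← hθ u hu, ← hθ' u hu]
  · obtain ⟨u, hu, rfl⟩ := hc' (Set.mem_univ j)
    rw [← hθ' u hu, ← hθ u hu]

theorem card_le_factorial_mul_card_image_colorClasses (X : Finset α) (V : Finset (α → κ))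
    {c₀ : α → κ} (hoff : ∀ c ∈ V, ∀ u ∉ X, c u = c₀ u) (hsurj : ∀ c ∈ V, Set.SurjOn c X Set.univ) :
    #V ≤ (Fintype.card κ)! * #(V.image (colorClasses X)) := by
  classical
  refine card_le_mul_card_image V _ fun F hF => ?_
  obtain ⟨c, hc, rfl⟩ := mem_image.1 hF
  -- a colouring with the same classes as `c` is `c` followed by a permutation of the colours
  calc #{c' ∈ V | colorClasses X c' = colorClasses X c}
      ≤ #(univ.image fun σ : Equiv.Perm κ => fun u => if u ∈ X then σ (c u) else c u) := by
        refine card_le_card fun c' hc' => ?_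
        obtain ⟨hc'V, hcc'⟩ := mem_filter.1 hc'
        obtain ⟨σ, hσ⟩ := exists_perm_of_colorClasses_eq (hsurj c hc) (hsurj c' hc'V) hcc'.symm
        refine mem_image.2 ⟨σ, mem_univ _, funext fun u => ?_⟩
        split_ifs with hu
        exacts [(hσ u hu).symm, (hoff c hc u hu).trans (hoff c' hc'V u hu).symm]
    _ ≤ (Fintype.card κ)! := card_image_le.trans (by rw [Finset.card_univ, Fintype.card_perm])

end ColorClasses

section Graph

variable {U W : Type*} [Fintype U] [Fintype W] [DecidableEq W] (r : U → W → Prop) [DecidableRel r]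

def coveredVerts (T : Finset W) : Finset U := {u | ∀ w, r u w → w ∈ T}

variable {r}

theorem mem_coveredVerts {T : Finset W} {u : U} : u ∈ coveredVerts r T ↔ ∀ w, r u w → w ∈ T := by
  simp [coveredVerts]

variable (r) in
theorem exists_minimal_card_lt_card_coveredVerts (k : ℕ)
    (hcard : k * Fintype.card W < Fintype.card U) :
    ∃ S : Finset W, k * #S < #(coveredVerts r S) ∧
      ∀ T : Finset W, #T < #S → #(coveredVerts r T) ≤ k * #T := by
  obtain ⟨S, hS, hmin⟩ := exists_min_image {T | k * #T < #(coveredVerts r T)} card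
    ⟨univ, mem_filter.2 ⟨mem_univ _, by simpa [coveredVerts] using hcard⟩⟩
  refine ⟨S, (mem_filter.1 hS).2, fun T hT => ?_⟩
  by_contra! h
  exact hT.not_ge (hmin T (mem_filter.2 ⟨mem_univ T, h⟩))

theorem mul_card_lt_card_biUnion_of_minimal [DecidableEq U] {k : ℕ} {S : Finset W}
    (hS : k * #S < #(coveredVerts r S))
    (hmin : ∀ T : Finset W, #T < #S → #(coveredVerts r T) ≤ k * #T) (R : Finset S)
    (hR : R.Nonempty) : k * #R < #(R.biUnion fun s => (coveredVerts r S).filter (r · s)) := by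
  set R' := R.map (Embedding.subtype _)
  have hR'S : R' ⊆ S := fun w hw => by
    obtain ⟨s, -, rfl⟩ := mem_map.1 hw
    exact s.2
  have hcover : coveredVerts r S ⊆
      (R.biUnion fun s => (coveredVerts r S).filter (r · s)) ∪ coveredVerts r (S \ R') := by
    intro u hu
    by_cases h : ∃ s ∈ R, r u s
    · obtain ⟨s, hs, hus⟩ := h
      exact mem_union_left _ (mem_biUnion.2 ⟨s, hs, mem_filter.2 ⟨hu, hus⟩⟩)
    · push Not at h
      refine mem_union_right _ (mem_coveredVerts.2 fun w hw => mem_sdiff.2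
        ⟨mem_coveredVerts.1 hu w hw, fun hwR => ?_⟩)
      obtain ⟨s, hs, rfl⟩ := mem_map.1 hwR
      exact h s hs hw
  have hcardR : #R' = #R := card_map _
  have hRS : #R ≤ #S := hcardR ▸ card_le_card hR'S
  have hrest := hmin (S \ R') (by
    rw [card_sdiff_of_subset hR'S, hcardR]; have := card_pos.2 hR; omega)
  rw [card_sdiff_of_subset hR'S, hcardR] at hrest
  have hsplit : k * (#S - #R) + k * #R = k * #S := by rw [← Nat.mul_add, Nat.sub_add_cancel hRS]
  have := (card_le_card hcover).trans (card_union_le _ _)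
  omega

-- The colour `0` outside `coveredVerts r S` makes a colouring determined by its colour classes up
-- to a permutation of the colours.
variable (r) in
def tverbergColorings [DecidableEq U] (k : ℕ) (S : Finset W) : Finset (U → Fin (k + 1)) :=
  {c | (∀ u ∉ coveredVerts r S, c u = 0) ∧
    ∀ w ∈ S, ∀ j, ∃ u ∈ coveredVerts r S, r u w ∧ c u = j}

theorem mul_pow_card_le_card_tverbergColorings [DecidableEq U] {k : ℕ} {S : Finset W}
    (hS : k * #S < #(coveredVerts r S))
    (hmin : ∀ T : Finset W, #T < #S → #(coveredVerts r T) ≤ k * #T) (hSne : S.Nonempty) :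
    (k + 1) * k ! ^ #S ≤ #(tverbergColorings r k S) := by
  set A : S → Finset U := fun s => (coveredVerts r S).filter fun u => r u s
  have hA := mul_card_lt_card_biUnion_of_minimal hS hmin
  obtain ⟨B, hBA, hB, hdisj⟩ := exists_pairwiseDisjoint_subsets_card_eq A k fun R =>
    R.eq_empty_or_nonempty.elim (fun h => by simp [h]) fun h => (hA R h).le
  have : Nonempty S := hSne.to_subtype
  obtain ⟨x, hxA, hxB⟩ := exists_mem_biUnion_notMem_biUnion hB hdisj hA univ_nonempty
  have hxX : x ∈ coveredVerts r S := by
    obtain ⟨s, -, hs⟩ := mem_biUnion.1 hxA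
    exact (mem_filter.1 hs).1
  -- `x` lies outside every `B s`, so its colour `j` can be prescribed
  have hfiber (j : Fin (k + 1)) : k ! ^ #S ≤ #{c ∈ tverbergColorings r k S | c x = j} := calc
    k ! ^ #S = k ! ^ #(univ : Finset S) := by rw [Finset.card_univ, Fintype.card_coe]
    _ ≤ #(rainbowExtensions A B univ (Function.update 0 x j)) :=
      pow_card_le_card_rainbowExtensions (by simp) hBA hB hdisj hA _ _
    _ ≤ #{c ∈ tverbergColorings r k S | c x = j} := by
      refine card_le_card fun c hc => ?_
      simp only [rainbowExtensions, mem_filter, mem_univ, true_and, true_implies] at hc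
      refine mem_filter.2 ⟨mem_filter.2 ⟨mem_univ c, fun u hu => ?_, fun w hw j' => ?_⟩, ?_⟩
      · have hux : u ≠ x := fun h => hu (h ▸ hxX)
        rw [hc.1 u fun h => hu ?_, Function.update_of_ne hux, Pi.zero_apply]
        obtain ⟨s, -, hs⟩ := mem_biUnion.1 h
        exact (mem_filter.1 (hBA s hs)).1
      · obtain ⟨u, hu, rfl⟩ := hc.2 ⟨w, hw⟩ j'
        exact ⟨u, (mem_filter.1 hu).1, (mem_filter.1 hu).2, rfl⟩
      · rw [hc.1 x hxB, Function.update_self]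
  calc (k + 1) * k ! ^ #S = ∑ _j : Fin (k + 1), k ! ^ #S := by simp
    _ ≤ ∑ j, #{c ∈ tverbergColorings r k S | c x = j} := sum_le_sum fun j _ => hfiber j
    _ = #(tverbergColorings r k S) := (card_eq_sum_card_fiberwise fun _ _ => mem_univ _).symm

theorem surjOn_of_mem_tverbergColorings [DecidableEq U] {k : ℕ} {S : Finset W}
    {c : U → Fin (k + 1)} (hc : c ∈ tverbergColorings r k S) (hSne : S.Nonempty) :
    Set.SurjOn c (coveredVerts r S) Set.univ := fun j _ => by
  obtain ⟨w, hw⟩ := hSne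
  obtain ⟨u, hu, -, rfl⟩ := (mem_filter.1 hc).2.2 w hw j
  exact ⟨u, hu, rfl⟩

theorem colorClasses_of_mem_tverbergColorings [DecidableEq U] {k : ℕ} {S : Finset W}
    {c : U → Fin (k + 1)} (hc : c ∈ tverbergColorings r k S) (hSne : S.Nonempty) :
    #(colorClasses (coveredVerts r S) c) = k + 1 ∧
      (∀ A ∈ colorClasses (coveredVerts r S) c, A.Nonempty) ∧
      (∀ A ∈ colorClasses (coveredVerts r S) c, ∀ B ∈ colorClasses (coveredVerts r S) c,
        A ≠ B → Disjoint A B) ∧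
      ∀ A ∈ colorClasses (coveredVerts r S) c, {w | ∃ u ∈ A, r u w} = ↑S := by
  have hsurj := surjOn_of_mem_tverbergColorings hc hSne
  refine ⟨by rw [card_colorClasses hsurj, Fintype.card_fin],
    fun A hA => nonempty_of_mem_colorClasses hsurj hA,
    fun A hA B hB => disjoint_of_mem_colorClasses hA hB, fun A hA => ?_⟩
  obtain ⟨j, -, rfl⟩ := mem_image.1 hA
  ext w
  constructor
  · rintro ⟨u, hu, huw⟩
    exact mem_coveredVerts.1 (mem_filter.1 hu).1 w huw
  · intro hw
    obtain ⟨u, hu, huw, rfl⟩ := (mem_filter.1 hc).2.2 w hw j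
    exact ⟨u, mem_filter.2 ⟨hu, rfl⟩, huw⟩

end Graph

theorem factorial_pow_pred_le {k n m : ℕ} (hn : n ≠ 0) (h : (k + 1) * k ! ^ n ≤ (k + 1)! * m) :
    k ! ^ (n - 1) ≤ m := by
  obtain ⟨n, rfl⟩ := Nat.exists_eq_add_one_of_ne_zero hn
  rw [Nat.factorial_succ, _root_.pow_succ', ← mul_assoc] at h
  simpa using Nat.le_of_mul_le_mul_left h (by positivity)

theorem bipartite_tverberg_general (U W : Type*) [Fintype U] [Fintype W]
    (r : U → W → Prop)
    (hU : ∀ u : U, ∃ w : W, r u w)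
    (q : ℕ) (hq : 1 ≤ q)
    (hcard : (q - 1) * Fintype.card W + 1 ≤ Fintype.card U) :
    (∃ Us : Fin q → Finset U, (∀ i, (Us i).Nonempty) ∧
        Pairwise (Function.onFun Disjoint Us) ∧
        ∀ i j, {w : W | ∃ u ∈ Us i, r u w} = {w : W | ∃ u ∈ Us j, r u w}) ∧
      ∃ S : Set W,
        ((q - 1).factorial) ^ (S.ncard - 1) ≤
          {F : Finset (Finset U) |
            F.card = q ∧
            (∀ A ∈ F, A.Nonempty) ∧
            (∀ A ∈ F, ∀ B ∈ F, A ≠ B → Disjoint A B) ∧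
            ∀ A ∈ F, {w : W | ∃ u ∈ A, r u w} = S}.ncard := by
  classical
  obtain ⟨k, rfl⟩ : ∃ k, q = k + 1 := ⟨q - 1, by omega⟩
  rw [Nat.add_sub_cancel] at hcard ⊢
  obtain ⟨S, hS, hmin⟩ := exists_minimal_card_lt_card_coveredVerts r k (by omega)
  obtain ⟨u, hu⟩ := card_pos.1 (pos_of_gt hS)
  have hSne : S.Nonempty := let ⟨w, hw⟩ := hU u; ⟨w, mem_coveredVerts.1 hu w hw⟩
  set X := coveredVerts r S
  set V := tverbergColorings r k S
  have hVcard := mul_pow_card_le_card_tverbergColorings hS hmin hSne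
  have hfamilies := card_le_factorial_mul_card_image_colorClasses X V
    (fun c hc => (mem_filter.1 hc).2.1) fun c hc => surjOn_of_mem_tverbergColorings hc hSne
  obtain ⟨c, hc⟩ : V.Nonempty := card_pos.1 (hVcard.trans_lt' (by positivity))
  obtain ⟨-, hne, -, hnbhd⟩ := colorClasses_of_mem_tverbergColorings hc hSne
  have hclass (j) : X.filter (c · = j) ∈ colorClasses X c := mem_image_of_mem _ (mem_univ j)
  refine ⟨⟨fun j => X.filter (c · = j), fun j => hne _ (hclass j),
    fun j j' hjj' => disjoint_filter.2 fun _ _ h h' => hjj' (h.symm.trans h'),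
    fun j j' => by rw [hnbhd _ (hclass j), hnbhd _ (hclass j')]⟩, S, ?_⟩
  calc k ! ^ ((S : Set W).ncard - 1) ≤ #(V.image (colorClasses X)) := by
        rw [Set.ncard_coe_finset]
        exact factorial_pow_pred_le hSne.card_pos.ne' (by simpa using hVcard.trans hfamilies)
    _ = (V.image (colorClasses X) : Set (Finset (Finset U))).ncard :=
        (Set.ncard_coe_finset _).symm
    _ ≤ _ := Set.ncard_le_ncard (fun F hF => ?_) (Set.toFinite _)
  obtain ⟨c, hc, rfl⟩ := mem_image.1 hF
  exact colorClasses_of_mem_tverbergColorings hc hSne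

/-- Tverberg-type theorem for bipartite graphs: if a bipartite graph with finite
color classes `U`, `W` (adjacency `r`) has no isolated vertices and
`|U| ≥ (q-1)|W| + 1`, then there are `q` pairwise disjoint nonempty subsets of
`U` with equal neighborhoods; moreover, for some common neighborhood `S ⊆ W`,
the number of distinct unordered families of `q` such subsets, all with
neighborhood exactly `S`, is at least `((q-1)!)^(|S|-1)`. -/
theorem bipartite_tverberg (U W : Type*) [Fintype U] [Fintype W]
    (r : U → W → Prop)
    (hU : ∀ u : U, ∃ w : W, r u w) (hW : ∀ w : W, ∃ u : U, r u w)
    (q : ℕ) (hq : 1 ≤ q)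
    (hcard : (q - 1) * Fintype.card W + 1 ≤ Fintype.card U) :
    (∃ Us : Fin q → Finset U, (∀ i, (Us i).Nonempty) ∧
        Pairwise (Function.onFun Disjoint Us) ∧
        ∀ i j, {w : W | ∃ u ∈ Us i, r u w} = {w : W | ∃ u ∈ Us j, r u w}) ∧
      ∃ S : Set W,
        ((q - 1).factorial) ^ (S.ncard - 1) ≤
          {F : Finset (Finset U) |
            F.card = q ∧
            (∀ A ∈ F, A.Nonempty) ∧
            (∀ A ∈ F, ∀ B ∈ F, A ≠ B → Disjoint A B) ∧
            ∀ A ∈ F, {w : W | ∃ u ∈ A, r u w} = S}.ncard :=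
  bipartite_tverberg_general U W r hU q hq hcard
end

section
/- Genericity lemma for conic Tverberg partitions: let q ≥ 2 and let x_1, …, x_n be n points in (Fin (d+1) → ℝ) with n ≤ (d+1)(q-1), and suppose the points are generic in the sense that the family of all n(d+1) real coordinates (x_i)_k, for i ∈ {1, …, n} and k ∈ {1, …, d+1}, is linearly independent over ℚ. Then there is no max-plus conic Tverberg partition into q parts; that is, there do not exist q pairwise disjoint nonempty subsets S_1, …, S_q of {1, …, n} and real numbers λ_i such that the componentwise maxima max_{i ∈ S_1} (λ_i + x_i), …, max_{i ∈ S_q} (λ_i + x_i) all coincide. -/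
/-!
Pick, in every part `S l` and every coordinate `k`, an index `a l k` attaining the maximum.
Fixing a part `l₀`, the `(d+1)(q-1)` numbers `x (a l₀ k) k - x (a l k) k` for `l ≠ l₀` are
`ℚ`-linearly independent, because each of them contains a coordinate `x (a l k) k` occurring in
no other one. But each of them also equals `lam (a l k) - lam (a l₀ k)`, so they lie in the
`ℚ`-span of the `n - 1` differences `lam i - lam i₀`. Hence `(d+1)(q-1) ≤ n - 1`.
-/

open Function Set Submodule

theorem LinearIndependent.comp_sub_comp {ι κ R M : Type*} [Ring R] [AddCommGroup M] [Module R M]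
    {v : ι → M} (hv : LinearIndependent R v) {f g : κ → ι} (hg : Injective g)
    (hfg : Disjoint (range f) (range g)) :
    LinearIndependent R fun j => v (f j) - v (g j) := by
  rw [linearIndependent_iff] at hv ⊢
  intro l hl
  have hfg_eq : l.mapDomain f = l.mapDomain g := by
    refine sub_eq_zero.mp (hv _ ?_)
    rw [map_sub, Finsupp.linearCombination_mapDomain, Finsupp.linearCombination_mapDomain]
    simpa only [Finsupp.linearCombination_apply, ← Finsupp.sum_sub, smul_sub, comp_apply] using hl
  ext j
  have := congr($hfg_eq (g j))
  rwa [Finsupp.mapDomain_apply hg, Finsupp.mapDomain_of_notMem_range _ _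
    (hfg.notMem_of_mem_right (mem_range_self j)), eq_comm] at this

theorem finrank_span_range_sub_le {ι K M : Type*} [Fintype ι] [DivisionRing K] [AddCommGroup M]
    [Module K M] (v : ι → M) (i₀ : ι) :
    (range fun i => v i - v i₀).finrank K ≤ Fintype.card ι - 1 := by
  classical
  have hsub : (range fun i => v i - v i₀) ⊆
      insert 0 (range fun i : {i // i ≠ i₀} => v i - v i₀) := by
    rintro _ ⟨i, rfl⟩
    by_cases hi : i = i₀
    · simp [hi]
    · exact mem_insert_of_mem _ ⟨⟨i, hi⟩, rfl⟩
  have := Module.Finite.span_of_finite K (finite_range fun i : {i // i ≠ i₀} => v i - v i₀)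
  calc (range fun i => v i - v i₀).finrank K
      ≤ (range fun i : {i // i ≠ i₀} => v i - v i₀).finrank K :=
        Submodule.finrank_mono ((span_mono hsub).trans_eq span_insert_zero)
    _ ≤ Fintype.card {i // i ≠ i₀} := finrank_range_le_card _
    _ = Fintype.card ι - 1 := Set.card_ne_eq i₀

theorem LinearIndependent.card_le_card_sub_one_of_forall_eq_sub {ι κ K M : Type*} [Fintype ι]
    [Fintype κ] [DivisionRing K] [AddCommGroup M] [Module K M] {y : κ → M}
    (hy : LinearIndependent K y) (v : ι → M) (hyv : ∀ j, ∃ a b, y j = v a - v b) :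
    Fintype.card κ ≤ Fintype.card ι - 1 := by
  cases isEmpty_or_nonempty κ with
  | inl => simp
  | inr hκ =>
    obtain ⟨i₀, -, -⟩ := hyv (Classical.arbitrary κ)
    have hspan : range y ⊆ span K (range fun i => v i - v i₀) := by
      rintro _ ⟨j, rfl⟩
      obtain ⟨a, b, hab⟩ := hyv j
      rw [hab, ← sub_sub_sub_cancel_right (v a) (v b) (v i₀)]
      exact sub_mem (subset_span ⟨a, rfl⟩) (subset_span ⟨b, rfl⟩)
    have := Module.Finite.span_of_finite K (finite_range fun i => v i - v i₀)
    calc Fintype.card κ = (range y).finrank K := linearIndependent_iff_card_eq_finrank_span.mp hy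
      _ ≤ (range fun i => v i - v i₀).finrank K :=
        Submodule.finrank_mono (span_le.mpr hspan)
      _ ≤ Fintype.card ι - 1 := finrank_span_range_sub_le v i₀

theorem card_mul_card_sub_one_lt_of_maxPlus_conic_partition {ι σ κ : Type*} [Fintype ι]
    [Fintype σ] [Fintype κ] [Nonempty κ] (x : ι → σ → ℝ)
    (hgen : LinearIndependent ℚ fun p : ι × σ => x p.1 p.2) (S : κ → Finset ι)
    (hS : ∀ l, (S l).Nonempty) (hdisj : Pairwise (Disjoint on S)) (lam : ι → ℝ) (p : σ → ℝ)
    (hp : ∀ l k, (S l).sup' (hS l) (fun i => lam i + x i k) = p k) :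
    Fintype.card σ * (Fintype.card κ - 1) < Fintype.card ι := by
  classical
  obtain ⟨l₀⟩ := ‹Nonempty κ›
  have hargmax : ∀ l k, ∃ i ∈ S l, lam i + x i k = p k := fun l k => by
    obtain ⟨i, hi, h⟩ := Finset.exists_mem_eq_sup' (hS l) fun i => lam i + x i k
    exact ⟨i, hi, by rw [← h, hp]⟩
  choose a haS hap using hargmax
  have ha_inj : ∀ {l l' k k'}, a l k = a l' k' → k = k' → l = l' := by
    rintro l l' k k' h rfl
    by_contra hne
    exact Finset.disjoint_left.mp (hdisj hne) (haS l k) (h ▸ haS l' k)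
  set f : σ × {l // l ≠ l₀} → ι × σ := fun j => (a l₀ j.1, j.1)
  set g : σ × {l // l ≠ l₀} → ι × σ := fun j => (a j.2 j.1, j.1)
  have hg : Injective g := by
    rintro ⟨k, l⟩ ⟨k', l'⟩ h
    obtain ⟨h₁, h₂⟩ := Prod.ext_iff.mp h
    exact Prod.ext h₂ (Subtype.ext (ha_inj h₁ h₂))
  have hfg : Disjoint (range f) (range g) := by
    refine disjoint_range_iff.mpr fun j j' h => ?_
    obtain ⟨h₁, h₂⟩ := Prod.ext_iff.mp h
    exact j'.2.2 (ha_inj h₁ h₂).symm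
  have hy := hgen.comp_sub_comp hg hfg
  have hcard := hy.card_le_card_sub_one_of_forall_eq_sub lam fun j =>
    ⟨a j.2 j.1, a l₀ j.1, by linarith [hap l₀ j.1, hap j.2 j.1]⟩
  have hι : 0 < Fintype.card ι := Fintype.card_pos_iff.mpr ⟨(hS l₀).choose⟩
  simp only [Fintype.card_prod, ne_eq, Fintype.card_subtype_compl, Fintype.card_subtype_eq] at hcard
  omega

/-- Genericity lemma for conic Tverberg partitions: if `n ≤ (d+1)(q-1)` and the
`n(d+1)` coordinates of the points `x 1, …, x n ∈ (Fin (d+1) → ℝ)` are linearly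
independent over `ℚ`, then there is no max-plus conic Tverberg partition of the
points into `q` parts. -/
theorem maxPlus_conic_tverberg_generic_lower_bound (d q n : ℕ) (hq : q ≥ 2)
    (hn : n ≤ (d + 1) * (q - 1))
    (x : Fin n → (Fin (d + 1) → ℝ))
    (hgen : LinearIndependent ℚ (fun p : Fin n × Fin (d + 1) => x p.1 p.2)) :
    ∀ (S : Fin q → Finset (Fin n)) (hS : ∀ l, (S l).Nonempty),
      Pairwise (Function.onFun Disjoint S) →
      ∀ lam : Fin n → ℝ,
        ¬ ∃ p : Fin (d + 1) → ℝ,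
            ∀ l k, ((S l).sup' (hS l) fun i => lam i + x i k) = p k := by
  rintro S hS hdisj lam ⟨p, hp⟩
  have : Nonempty (Fin q) := ⟨⟨0, by omega⟩⟩
  have hcard := card_mul_card_sub_one_lt_of_maxPlus_conic_partition x hgen S hS hdisj lam p hp
  simp only [Fintype.card_fin] at hcard
  omega
end
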